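/- Let M = (S, A, X, T, i) be a parametric MDP with induced POMDP M', and let f denote the bijection from Hist_X to Hist' given by f(x, s0·a0·⋯·sn) = (s0,x)·a0·⋯·(sn,x). Then the assignment Φ(π_X) = π_X ∘ f⁻¹ is a bijective correspondence between the pMDP policies of M and the POMDP policies of M', with inverse Φ⁻¹(π') = π' ∘ f. -/

import Mathlib

open MeasureTheory ENNReal

namespace PMDPEncoding

universe u v w

variable {S : Type u} {A : Type v} {X : Type w}

/-- An infinite alternating sequence of state-action pairs
(the `k`-th pair consists of the `k`-th state and the `k`-th action of the run). -/
abbrev RunSeq (S : Type u) (A : Type v) := ℕ → S × A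

/-- `ρ` is a run of the MDP with transition function `T`:
all transitions have positive probability. -/
def IsRun (T : S → A → PMF S) (ρ : RunSeq S A) : Prop :=
  ∀ k, 0 < T (ρ k).1 (ρ k).2 (ρ (k + 1)).1

/-- A history: a finite list of state-action pairs followed by a final state. -/
abbrev Hist (S : Type u) (A : Type v) := List (S × A) × S

/-- The first state of a history. -/
def Hist.first (h : Hist S A) : S :=
  match h.1 with
  | [] => h.2
  | p :: _ => p.1

/-- Auxiliary for `IsHist`: validity of the list part of a history with final state `t`. -/
def IsHistL (T : S → A → PMF S) : List (S × A) → S → Prop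
  | [], _ => True
  | (s, a) :: rest, t => 0 < T s a (Hist.first (rest, t)) ∧ IsHistL T rest t

/-- `h` is a history (finite prefix of a run) of the MDP with transition function `T`. -/
def IsHist (T : S → A → PMF S) (h : Hist S A) : Prop := IsHistL T h.1 h.2

/-- The set of runs of the MDP with transition function `T`. -/
def Runs (T : S → A → PMF S) := {ρ : RunSeq S A // IsRun T ρ}

/-- The set of (raw) sequences having the history `h` as a prefix. -/
def ConeSeq (h : Hist S A) : Set (RunSeq S A) :=
  {ρ | (∀ k, (hk : k < h.1.length) → ρ k = h.1[k]'hk) ∧ (ρ h.1.length).1 = h.2}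

/-- The cone of a history: the set of runs with prefix `h`. -/
def Cone (T : S → A → PMF S) (h : Hist S A) : Set (Runs T) :=
  {ρ | ρ.1 ∈ ConeSeq h}

/-- The σ-algebra on runs generated by the cones of histories. -/
instance conesAlg (T : S → A → PMF S) : MeasurableSpace (Runs T) :=
  MeasurableSpace.generateFrom {C | ∃ h : Hist S A, IsHist T h ∧ C = Cone T h}

/-- Valid histories of an MDP, as a subtype. -/
def HistOf (T : S → A → PMF S) := {h : Hist S A // IsHist T h}

/-- Auxiliary function for the probability of a cone:
`pre` is the prefix of the history processed so far. -/
noncomputable def coneProbAux (T : S → A → PMF S) (π : Hist S A → PMF A) :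
    List (S × A) → List (S × A) → S → ℝ≥0∞
  | _, [], _ => 1
  | pre, (s, a) :: rest, t =>
      π (pre, s) a * T s a (Hist.first (rest, t)) *
        coneProbAux T π (pre ++ [(s, a)]) rest t

/-- The probability `i(s₀) · ∏_{k<n} π(s₀a₀…s_k)(a_k) · T(s_k,a_k)(s_{k+1})` that the
induced measure of policy `π` and initial distribution `i` assigns to the cone of a history. -/
noncomputable def coneProb (T : S → A → PMF S) (i : PMF S) (π : Hist S A → PMF A)
    (h : Hist S A) : ℝ≥0∞ :=
  i h.first * coneProbAux T π [] h.1 h.2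

/-- The evaluated transition function `T_x` of a pMDP at parameter point `x`. -/
def evalT (T : S → A → X → PMF S) (x : X) : S → A → PMF S := fun s a => T s a x

/-- Runs of a pMDP: pairs `(x, ρ)` of a parameter value `x` and a run `ρ` of `M(x)`. -/
def RunsX (T : S → A → X → PMF S) := {q : X × RunSeq S A // IsRun (evalT T q.1) q.2}

/-- Valid histories of a pMDP: pairs `(x, h)` with `h` a history of `M(x)`. -/
def HistX (T : S → A → X → PMF S) := {q : X × Hist S A // IsHist (evalT T q.1) q.2}

/-- The generator set `{x} × Cone(h)` of the σ-algebra on the runs of a pMDP. -/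
def ConeX (T : S → A → X → PMF S) (x : X) (h : Hist S A) : Set (RunsX T) :=
  {q | q.1.1 = x ∧ q.1.2 ∈ ConeSeq h}

/-- The σ-algebra on the runs of a pMDP generated by the sets `{x} × Cone(h)`. -/
instance conesXAlg (T : S → A → X → PMF S) : MeasurableSpace (RunsX T) :=
  MeasurableSpace.generateFrom
    {C | ∃ (x : X) (h : Hist S A), IsHist (evalT T x) h ∧ C = ConeX T x h}

/-- The transition function `T'` of the induced POMDP of a pMDP:
`T'((s,x),a)(s',x') = T(s,a)(x)(s') · δ_x(x')`. -/
noncomputable def indT (T : S → A → X → PMF S) : S × X → A → PMF (S × X) :=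
  fun sx a => (T sx.1 a sx.2).map fun s' => (s', sx.2)

/-- The observation function of the induced POMDP: `O(s,x) = s`. -/
def obs : S × X → S := Prod.fst

/-- The observation map extended to histories of the induced POMDP. -/
def obsHist : Hist (S × X) A → Hist S A :=
  fun h => (h.1.map fun p => (p.1.1, p.2), h.2.1)

/-- The map `f` on raw sequences: `f(x, s₀·a₀·s₁·⋯) = (s₀,x)·a₀·(s₁,x)·⋯`. -/
def fSeq (x : X) (ρ : RunSeq S A) : RunSeq (S × X) A :=
  fun k => (((ρ k).1, x), (ρ k).2)

theorem indT_pos {T : S → A → X → PMF S} {s s' : S} {a : A} {x : X}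
    (h : 0 < T s a x s') : 0 < indT T (s, x) a (s', x) := by
  have hmem : (s', x) ∈ ((T s a x).map fun u => (u, x)).support := by
    rw [PMF.support_map]
    exact ⟨s', (PMF.mem_support_iff _ _).2 h.ne', rfl⟩
  exact pos_iff_ne_zero.mpr ((PMF.mem_support_iff _ _).1 hmem)

/-- The map `f : Runs_X → Runs'` from the runs of a pMDP to the runs of its induced POMDP. -/
def fRun (T : S → A → X → PMF S) (q : RunsX T) : Runs (indT T) :=
  ⟨fSeq q.1.1 q.1.2, fun k => indT_pos (q.2 k)⟩

/-- The map `f` on raw histories: `f(x, s₀·a₀·⋯·s_n) = (s₀,x)·a₀·⋯·(s_n,x)`. -/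
def fHistSeq (x : X) (h : Hist S A) : Hist (S × X) A :=
  (h.1.map fun p => ((p.1, x), p.2), (h.2, x))

theorem isHist_fHistSeq (T : S → A → X → PMF S) (x : X) :
    ∀ (l : List (S × A)) (t : S), IsHist (evalT T x) (l, t) →
      IsHist (indT T) (fHistSeq x (l, t))
  | [], _, _ => trivial
  | (s, a) :: rest, t, hv => by
      obtain ⟨h1, h2⟩ := hv
      have hrec := isHist_fHistSeq T x rest t h2
      refine ⟨?_, hrec⟩
      show 0 < indT T (s, x) a (Hist.first ((rest.map fun p => ((p.1, x), p.2)), (t, x)))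
      have hfirst : Hist.first ((rest.map fun p => ((p.1, x), p.2) : List ((S × X) × A)), (t, x)) =
          (Hist.first (rest, t), x) := by
        cases rest <;> rfl
      rw [hfirst]
      exact indT_pos h1

/-- The map `f : Hist_X → Hist'` from the histories of a pMDP to the histories of
its induced POMDP. -/
def fHistX (T : S → A → X → PMF S) (q : HistX T) : HistOf (indT T) :=
  ⟨fHistSeq q.1.1 q.1.2, isHist_fHistSeq T q.1.1 q.1.2.1 q.1.2.2 q.2⟩

/-- Some run of an MDP: start anywhere, always pick a fixed action, and follow the
support of the transition distributions. -/
noncomputable def someRunSeq (T : S → A → PMF S) (sa : S × A) (a : A) : RunSeq S A :=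
  fun k => Nat.rec sa (fun _ ih => ((PMF.support_nonempty (T ih.1 ih.2)).some, a)) k

theorem someRunSeq_isRun (T : S → A → PMF S) (sa : S × A) (a : A) :
    IsRun T (someRunSeq T sa a) := by
  intro k
  exact pos_iff_ne_zero.mpr <| (PMF.mem_support_iff _ _).1 <|
    (PMF.support_nonempty (T (someRunSeq T sa a k).1 (someRunSeq T sa a k).2)).some_mem

instance instNonemptyRuns [Nonempty S] [Nonempty A] (T : S → A → PMF S) :
    Nonempty (Runs T) :=
  ⟨⟨someRunSeq T (Classical.arbitrary S, Classical.arbitrary A) (Classical.arbitrary A),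
    someRunSeq_isRun _ _ _⟩⟩

instance instNonemptyRunsX [Nonempty S] [Nonempty A] [Nonempty X] (T : S → A → X → PMF S) :
    Nonempty (RunsX T) :=
  ⟨⟨(Classical.arbitrary X,
      someRunSeq (evalT T (Classical.arbitrary X))
        (Classical.arbitrary S, Classical.arbitrary A) (Classical.arbitrary A)),
    someRunSeq_isRun _ _ _⟩⟩

instance instNonemptyHistX [Nonempty S] [Nonempty X] (T : S → A → X → PMF S) :
    Nonempty (HistX T) :=
  ⟨⟨(Classical.arbitrary X, ([], Classical.arbitrary S)), trivial⟩⟩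

instance instNonemptyHistOf [Nonempty S] (T : S → A → PMF S) :
    Nonempty (HistOf T) :=
  ⟨⟨([], Classical.arbitrary S), trivial⟩⟩

instance instNonemptyPMDPPolicy [Nonempty S] [Nonempty A] [Nonempty X]
    (T : S → A → X → PMF S) :
    Nonempty {π : HistX T → PMF A // ∀ q q' : HistX T, q.1.2 = q'.1.2 → π q = π q'} :=
  ⟨⟨fun _ => PMF.pure (Classical.arbitrary A), fun _ _ _ => rfl⟩⟩

/-!
Transitions of the induced POMDP never change the parameter component, so along every history
of `M'` the parameter is constant. Hence `f` is a bijection whose inverse reads the parameter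
off the last state and projects it away, and the observation of `f(x, h)` is `h` itself. So two
histories of `M'` have the same observation exactly when their preimages under `f` share the
underlying history, and precomposition with `f` or `f⁻¹` exchanges the two invariance
conditions defining pMDP and POMDP policies.
-/

theorem _root_.Equiv.invFun_eq_symm {α β : Sort*} [Nonempty α] (e : α ≃ β) :
    Function.invFun e = e.symm :=
  Function.invFun_eq_of_injective_of_rightInverse e.injective e.right_inv

/-- Precomposition with `e.symm` identifies the functions constant on the fibres of `p` with
those constant on the fibres of `p'`. -/
def constOnFibersEquiv {α β γ : Sort*} (e : α ≃ β) {p : α → γ} {p' : β → γ}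
    (he : ∀ a, p' (e a) = p a) (δ : Sort*) :
    {π : α → δ // ∀ a b, p a = p b → π a = π b} ≃
      {π : β → δ // ∀ a b, p' a = p' b → π a = π b} :=
  (e.arrowCongr (Equiv.refl δ)).subtypeEquiv fun π => by
    have he' : ∀ b, p (e.symm b) = p' b := fun b => by rw [← he, e.apply_symm_apply]
    simp only [Equiv.arrowCongr_apply, Equiv.coe_refl, Function.comp_apply, id_eq]
    constructor
    · exact fun h a b hab => h _ _ (by rw [he', he', hab])
    · intro h a b hab
      simpa using h (e a) (e b) (by rw [he, he, hab])

theorem indT_pos_iff {T : S → A → X → PMF S} {s : S} {a : A} {x : X} {p : S × X} :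
    0 < indT T (s, x) a p ↔ 0 < T s a x p.1 ∧ p.2 = x := by
  simp only [pos_iff_ne_zero, ← PMF.mem_support_iff, indT, PMF.support_map]
  constructor
  · rintro ⟨u, hu, rfl⟩
    exact ⟨hu, rfl⟩
  · rintro ⟨hp, rfl⟩
    exact ⟨p.1, hp, rfl⟩

theorem Hist.first_snd_eq {l : List ((S × X) × A)} {t : S × X}
    (hl : ∀ p ∈ l, p.1.2 = t.2) : (Hist.first (l, t)).2 = t.2 := by
  cases l with
  | nil => rfl
  | cons p _ => exact hl p List.mem_cons_self

theorem Hist.first_fHistSeq (x : X) (h : Hist S A) :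
    (fHistSeq x h).first = (h.first, x) := by
  rcases h with ⟨_ | _, _⟩ <;> rfl

theorem isHistL_indT_param_eq {T : S → A → X → PMF S} :
    ∀ {l : List ((S × X) × A)} {t : S × X}, IsHistL (indT T) l t → ∀ p ∈ l, p.1.2 = t.2
  | [], _, _ => by simp
  | ((_, _), _) :: _, _, ⟨hpos, hrest⟩ => by
      have hparam := isHistL_indT_param_eq hrest
      refine List.forall_mem_cons.2 ⟨?_, hparam⟩
      rw [← Hist.first_snd_eq hparam, (indT_pos_iff.1 hpos).2]

theorem isHist_of_isHist_fHistSeq {T : S → A → X → PMF S} {x : X} :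
    ∀ {l : List (S × A)} {t : S}, IsHist (indT T) (fHistSeq x (l, t)) →
      IsHist (evalT T x) (l, t)
  | [], _, _ => trivial
  | (_, _) :: rest, t, ⟨hpos, hrest⟩ => by
      change 0 < indT T (_, x) _ (fHistSeq x (rest, t)).first at hpos
      rw [Hist.first_fHistSeq] at hpos
      exact ⟨(indT_pos_iff.1 hpos).1, isHist_of_isHist_fHistSeq hrest⟩

theorem obsHist_fHistSeq (x : X) (h : Hist S A) : obsHist (fHistSeq x h) = h := by
  simp [obsHist, fHistSeq, Function.comp_def]

theorem fHistSeq_obsHist {h : Hist (S × X) A} (hh : ∀ p ∈ h.1, p.1.2 = h.2.2) :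
    fHistSeq h.2.2 (obsHist h) = h := by
  refine Prod.ext ?_ rfl
  simp only [obsHist, fHistSeq, List.map_map]
  refine (List.map_congr_left fun p hp => ?_).trans (List.map_id _)
  rw [Function.comp_apply, ← hh p hp]
  rfl

theorem isHist_obsHist {T : S → A → X → PMF S} {h : Hist (S × X) A}
    (hh : IsHist (indT T) h) : IsHist (evalT T h.2.2) (obsHist h) := by
  have hf := fHistSeq_obsHist (isHistL_indT_param_eq hh)
  exact isHist_of_isHist_fHistSeq (hf.symm ▸ hh)

def histEquiv (T : S → A → X → PMF S) : HistX T ≃ HistOf (indT T) where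
  toFun := fHistX T
  invFun h := ⟨(h.1.2.2, obsHist h.1), isHist_obsHist h.2⟩
  left_inv q := Subtype.ext (Prod.ext rfl (obsHist_fHistSeq q.1.1 q.1.2))
  right_inv h := Subtype.ext (fHistSeq_obsHist (isHistL_indT_param_eq h.2))

/-- The assignment `Φ(π_X) = π_X ∘ f⁻¹` is a bijective correspondence
between the pMDP policies of `M` and the POMDP policies of its induced POMDP `M'`,
with inverse `Φ⁻¹(π') = π' ∘ f`. -/
theorem policy_bijective_correspondence [Nonempty S] [Nonempty A] [Nonempty X]
    (T : S → A → X → PMF S) :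
    ∃ Φ : {π : HistX T → PMF A // ∀ q q' : HistX T, q.1.2 = q'.1.2 → π q = π q'} →
        {π' : HistOf (indT T) → PMF A //
          ∀ h1 h2 : HistOf (indT T), obsHist h1.1 = obsHist h2.1 → π' h1 = π' h2},
      (∀ π h', (Φ π).1 h' = π.1 (Function.invFun (fHistX T) h')) ∧
      Function.Bijective Φ ∧
      (∀ π' q, (Function.invFun Φ π').1 q = π'.1 (fHistX T q)) := by
  let Φ := constOnFibersEquiv (histEquiv T) (p := fun q : HistX T => q.1.2)
    (p' := fun h : HistOf (indT T) => obsHist h.1) (fun q => obsHist_fHistSeq q.1.1 q.1.2) (PMF A)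
  refine ⟨Φ, fun π h' => ?_, Φ.bijective, fun π' q => ?_⟩
  · rw [show fHistX T = histEquiv T from rfl, Equiv.invFun_eq_symm]
    rfl
  · rw [Equiv.invFun_eq_symm]
    rfl

end PMDPEncoding
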